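/- The edge-balanced index set of the crown graph K_4 × K_2 is {0, 2, 4}. -/

import Mathlib

open SimpleGraph

/-- The lexicographic product (composition) `G[H]`. -/
def lexProd {α β : Type*} (G : SimpleGraph α) (H : SimpleGraph β) :
    SimpleGraph (α × β) where
  Adj x y := G.Adj x.1 y.1 ∨ (x.1 = y.1 ∧ H.Adj x.2 y.2)
  symm := ⟨fun x y (h : G.Adj x.1 y.1 ∨ (x.1 = y.1 ∧ H.Adj x.2 y.2)) =>
    h.elim (fun h' => Or.inl h'.symm) (fun ⟨he, h2⟩ => Or.inr ⟨he.symm, h2.symm⟩)⟩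
  loopless := ⟨fun x (h : G.Adj x.1 x.1 ∨ (x.1 = x.1 ∧ H.Adj x.2 x.2)) =>
    h.elim (G.loopless.irrefl x.1) (fun ⟨_, h2⟩ => H.loopless.irrefl x.2 h2)⟩

/-- The direct (tensor, Kronecker) product `G × H`. -/
def tensorProd {α β : Type*} (G : SimpleGraph α) (H : SimpleGraph β) :
    SimpleGraph (α × β) where
  Adj x y := G.Adj x.1 y.1 ∧ H.Adj x.2 y.2
  symm := ⟨fun _ _ (h : G.Adj _ _ ∧ H.Adj _ _) => ⟨h.1.symm, h.2.symm⟩⟩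
  loopless := ⟨fun x (h : G.Adj x.1 x.1 ∧ H.Adj x.2 x.2) => G.loopless.irrefl x.1 h.1⟩

/-- The number of edges labeled `i` by the edge labeling `f`. -/
noncomputable def edgeCount {V : Type*} (G : SimpleGraph V) (f : G.edgeSet → ZMod 2) (i : ZMod 2) : ℕ :=
  Nat.card {e : G.edgeSet // f e = i}

/-- The number of edges incident to `v` that are labeled `i` (the `i`-degree of `v`). -/
noncomputable def labDeg {V : Type*} (G : SimpleGraph V) (f : G.edgeSet → ZMod 2) (i : ZMod 2) (v : V) : ℕ :=
  Nat.card {e : G.edgeSet // f e = i ∧ v ∈ (e : Sym2 V)}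

/-- The number of vertices whose induced (partial) label is `i`: those incident to strictly
more `i`-edges than `(1-i)`-edges. -/
noncomputable def vertexCount {V : Type*} (G : SimpleGraph V) (f : G.edgeSet → ZMod 2) (i : ZMod 2) : ℕ :=
  Nat.card {v : V // labDeg G f (1 - i) v < labDeg G f i v}

/-- An edge labeling (a surjective function onto `ZMod 2`) is edge-friendly if
`|e_f(0) - e_f(1)| ≤ 1`. -/
def EdgeFriendly {V : Type*} (G : SimpleGraph V) (f : G.edgeSet → ZMod 2) : Prop :=
  Function.Surjective f ∧ |(edgeCount G f 0 : ℤ) - (edgeCount G f 1 : ℤ)| ≤ 1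

/-- A graph is strongly edge-balanced if some edge-friendly labeling `f` satisfies
`v_f(0) = v_f(1)` and `e_f(0) = e_f(1)`. -/
def StronglyEdgeBalanced {V : Type*} (G : SimpleGraph V) : Prop :=
  ∃ f : G.edgeSet → ZMod 2, EdgeFriendly G f ∧
    vertexCount G f 0 = vertexCount G f 1 ∧ edgeCount G f 0 = edgeCount G f 1

/-- `|v_f(0) - v_f(1)|` for an edge labeling `f`. -/
noncomputable def ebIndex {V : Type*} (G : SimpleGraph V) (f : G.edgeSet → ZMod 2) : ℕ :=
  ((vertexCount G f 0 : ℤ) - (vertexCount G f 1 : ℤ)).natAbs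

/-- The edge-balanced index set of `G`. -/
def EBI {V : Type*} (G : SimpleGraph V) : Set ℕ :=
  {k | ∃ f : G.edgeSet → ZMod 2, EdgeFriendly G f ∧ ebIndex G f = k}

/-- The crown graph `K_n × K_2`: the direct product of the complete graph on `n` vertices
with `K_2`; `(u,a)` is adjacent to `(v,b)` iff `u ≠ v` and `a ≠ b`. -/
def crown (n : ℕ) : SimpleGraph (Fin n × Fin 2) :=
  tensorProd (⊤ : SimpleGraph (Fin n)) (⊤ : SimpleGraph (Fin 2))

/-!
The crown graph `K_4 × K_2` is 3-regular with 8 vertices and 12 edges, so an edge-friendly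
labelling has six edges of each label, and every vertex, having odd degree, receives a label.
A vertex labelled `i` carries at least two `i`-edges, while the `i`-degrees sum to
`2 e_f(i) = 12`; hence `v_f(i) ≤ 6`, and with `v_f(0) + v_f(1) = 8` the index
`|v_f(0) - v_f(1)| = |2 v_f(0) - 8|` lies in `{0, 2, 4}`. Explicit labellings attain each value.
-/

open Finset

theorem EdgeFriendly.of_edgeCount_eq {V : Type*} {G : SimpleGraph V} {f : G.edgeSet → ZMod 2}
    (heq : edgeCount G f 0 = edgeCount G f 1) (hpos : 0 < edgeCount G f 0) :
    EdgeFriendly G f := by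
  refine ⟨fun i => ?_, by simp [heq]⟩
  have hi : 0 < edgeCount G f i := by fin_cases i; exacts [hpos, heq ▸ hpos]
  obtain ⟨⟨e, he⟩⟩ := (Nat.card_pos_iff.1 hi).1
  exact ⟨e, he⟩

theorem ZMod.card_filter_eq_zero_add_card_filter_eq_one {α : Type*} (s : Finset α)
    (g : α → ZMod 2) : #{a ∈ s | g a = 0} + #{a ∈ s | g a = 1} = #s := by
  rw [← card_filter_add_card_filter_not (s := s) (fun a => g a = 0)]
  congr 2
  exact filter_congr fun a _ => (by decide : ∀ x : ZMod 2, x = 1 ↔ ¬x = 0) (g a)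

section Counting

variable {V : Type*} [Fintype V] {G : SimpleGraph V} (f : G.edgeSet → ZMod 2)

theorem vertexCount_eq_card_filter (i : ZMod 2) :
    vertexCount G f i = #{v | labDeg G f (1 - i) v < labDeg G f i v} := by
  rw [vertexCount, Nat.card_eq_fintype_card, Fintype.card_subtype]

variable [DecidableRel G.Adj]

theorem edgeCount_eq_card_filter (i : ZMod 2) : edgeCount G f i = #{e | f e = i} := by
  rw [edgeCount, Nat.card_eq_fintype_card, Fintype.card_subtype]

theorem edgeCount_zero_add_edgeCount_one :
    edgeCount G f 0 + edgeCount G f 1 = #G.edgeFinset := by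
  rw [edgeCount_eq_card_filter, edgeCount_eq_card_filter,
    ZMod.card_filter_eq_zero_add_card_filter_eq_one, card_univ, edgeFinset, Set.toFinset_card]

variable [DecidableEq V]

theorem labDeg_eq_card_filter (i : ZMod 2) (v : V) :
    labDeg G f i v = #{e : G.edgeSet | f e = i ∧ v ∈ (e : Sym2 V)} := by
  rw [labDeg, Nat.card_eq_fintype_card, Fintype.card_subtype]

theorem labDeg_zero_add_labDeg_one (v : V) :
    labDeg G f 0 v + labDeg G f 1 v = G.degree v := by
  have hsplit := ZMod.card_filter_eq_zero_add_card_filter_eq_one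
    {e : G.edgeSet | v ∈ (e : Sym2 V)} f
  have hinc : #{e : G.edgeSet | v ∈ (e : Sym2 V)} = G.degree v := by
    rw [← Fintype.card_subtype, ← Nat.card_eq_fintype_card, ← card_incidenceSet_eq_degree,
      ← Nat.card_eq_fintype_card]
    exact Nat.card_congr (Equiv.subtypeSubtypeEquivSubtypeInter (· ∈ G.edgeSet) (v ∈ ·))
  simp only [filter_filter] at hsplit
  simp only [labDeg_eq_card_filter, and_comm (a := f _ = _)]
  rw [hsplit, hinc]

theorem sum_labDeg (i : ZMod 2) : ∑ v, labDeg G f i v = 2 * edgeCount G f i := by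
  have hends (e : G.edgeSet) : #{v | v ∈ (e : Sym2 V)} = 2 := by
    rw [← Sym2.card_toFinset_of_not_isDiag _ (G.not_isDiag_of_mem_edgeSet e.2)]
    congr 1
    ext v
    simp
  have hcount := sum_card_bipartiteAbove_eq_sum_card_bipartiteBelow (s := univ)
    (t := ({e | f e = i} : Finset G.edgeSet)) (r := fun v (e : G.edgeSet) => v ∈ (e : Sym2 V))
  simp only [bipartiteAbove, bipartiteBelow, filter_filter, hends, sum_const, smul_eq_mul] at hcount
  simp only [labDeg_eq_card_filter, edgeCount_eq_card_filter, hcount, mul_comm]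

theorem vertexCount_zero_add_vertexCount_one
    (hodd : ∀ v, Odd (G.degree v)) :
    vertexCount G f 0 + vertexCount G f 1 = Fintype.card V := by
  simp only [vertexCount_eq_card_filter, sub_zero, sub_self]
  rw [← card_univ, ← card_filter_add_card_filter_not (s := univ)
    (fun v => labDeg G f 1 v < labDeg G f 0 v)]
  congr 2
  refine filter_congr fun v _ => ?_
  obtain ⟨k, hk⟩ := hodd v
  have := labDeg_zero_add_labDeg_one f v
  omega

theorem SimpleGraph.IsRegularOfDegree.vertexCount_mul_le {d : ℕ} (hG : G.IsRegularOfDegree d)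
    (i : ZMod 2) : (d / 2 + 1) * vertexCount G f i ≤ 2 * edgeCount G f i := by
  have hdeg (v : V) : labDeg G f (1 - i) v + labDeg G f i v = d := by
    rw [← hG.degree_eq v, ← labDeg_zero_add_labDeg_one f v]
    fin_cases i
    · exact add_comm _ _
    · rfl
  rw [vertexCount_eq_card_filter, ← sum_labDeg, mul_comm, ← smul_eq_mul]
  calc _ ≤ ∑ v ∈ {v | labDeg G f (1 - i) v < labDeg G f i v}, labDeg G f i v :=
        card_nsmul_le_sum _ _ _ fun v hv => by
          have := hdeg v
          rw [mem_filter] at hv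
          omega
    _ ≤ ∑ v, labDeg G f i v := sum_le_sum_of_subset (subset_univ _)

end Counting

theorem EdgeFriendly.edgeCount_zero_eq_edgeCount_one {V : Type*} [Fintype V] {G : SimpleGraph V}
    [DecidableRel G.Adj] {f : G.edgeSet → ZMod 2} (hf : EdgeFriendly G f)
    (heven : Even #G.edgeFinset) : edgeCount G f 0 = edgeCount G f 1 := by
  have htotal := edgeCount_zero_add_edgeCount_one f
  have hdiff := abs_le.1 hf.2
  obtain ⟨k, hk⟩ := heven
  omega

def labelingZeroOn {V : Type*} [DecidableEq V] {G : SimpleGraph V} (S : Finset (Sym2 V)) :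
    G.edgeSet → ZMod 2 :=
  fun e => if (e : Sym2 V) ∈ S then 0 else 1

instance (n : ℕ) : DecidableRel (crown n).Adj := fun x y =>
  inferInstanceAs (Decidable (x.1 ≠ y.1 ∧ x.2 ≠ y.2))

theorem crown_adj {n : ℕ} {x y : Fin n × Fin 2} : (crown n).Adj x y ↔ x.1 ≠ y.1 ∧ x.2 ≠ y.2 :=
  Iff.rfl

theorem crown_isRegularOfDegree (n : ℕ) : (crown n).IsRegularOfDegree (n - 1) := by
  rintro ⟨u, a⟩
  rw [← card_neighborFinset_eq_degree, neighborFinset_eq_filter, ← univ_product_univ]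
  simp only [crown_adj]
  rw [filter_product (p := (u ≠ ·)) (q := (a ≠ ·)), card_product, filter_ne, filter_ne,
    card_erase_of_mem (mem_univ _), card_erase_of_mem (mem_univ _), card_univ, card_univ,
    Fintype.card_fin, Fintype.card_fin]
  omega

theorem card_edgeFinset_crown (n : ℕ) : #(crown n).edgeFinset = n * (n - 1) := by
  have h := (crown n).sum_degrees_eq_twice_card_edges
  simp only [(crown_isRegularOfDegree n).degree_eq, sum_const, card_univ, Fintype.card_prod,
    Fintype.card_fin, smul_eq_mul] at h
  exact Nat.eq_of_mul_eq_mul_left two_pos (by rw [← h]; ring)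

theorem EBI_crown_four_subset : EBI (crown 4) ⊆ {0, 2, 4} := by
  rintro k ⟨f, hf, rfl⟩
  have hreg : (crown 4).IsRegularOfDegree 3 := crown_isRegularOfDegree 4
  have hedges : #(crown 4).edgeFinset = 12 := card_edgeFinset_crown 4
  have he := hf.edgeCount_zero_eq_edgeCount_one (by rw [hedges]; decide)
  have htotal := edgeCount_zero_add_edgeCount_one f
  have hv := vertexCount_zero_add_vertexCount_one f fun v => by rw [hreg.degree_eq]; decide
  have h0 := hreg.vertexCount_mul_le f 0
  have h1 := hreg.vertexCount_mul_le f 1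
  simp only [Fintype.card_prod, Fintype.card_fin] at hv
  simp only [ebIndex, Set.mem_insert_iff, Set.mem_singleton_iff]
  omega

/- The six 0-edges of each witness are the star at `(0,0)` together with the star at `(1,0)`,
the path `(0,1) (1,0) (2,1) (3,0)`, or the star at `(0,1)`; this leaves 4, 3 or 2 vertices
labelled 0. -/
theorem subset_EBI_crown_four : {0, 2, 4} ⊆ EBI (crown 4) := by
  have hfriendly (S : Finset (Sym2 (Fin 4 × Fin 2)))
      (h : edgeCount (crown 4) (labelingZeroOn S) 0 = 6) :
      EdgeFriendly (crown 4) (labelingZeroOn S) := by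
    have htotal := edgeCount_zero_add_edgeCount_one (labelingZeroOn (G := crown 4) S)
    rw [card_edgeFinset_crown] at htotal
    exact EdgeFriendly.of_edgeCount_eq (by omega) (by omega)
  rintro k (rfl | rfl | rfl)
  · refine ⟨labelingZeroOn {s((0,0),(1,1)), s((0,0),(2,1)), s((0,0),(3,1)),
      s((1,0),(0,1)), s((1,0),(2,1)), s((1,0),(3,1))}, hfriendly _ ?_, ?_⟩
    · rw [edgeCount_eq_card_filter]; decide
    · simp only [ebIndex, vertexCount_eq_card_filter, labDeg_eq_card_filter]; decide
  · refine ⟨labelingZeroOn {s((0,0),(1,1)), s((0,0),(2,1)), s((0,0),(3,1)),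
      s((1,0),(0,1)), s((1,0),(2,1)), s((3,0),(2,1))}, hfriendly _ ?_, ?_⟩
    · rw [edgeCount_eq_card_filter]; decide
    · simp only [ebIndex, vertexCount_eq_card_filter, labDeg_eq_card_filter]; decide
  · refine ⟨labelingZeroOn {s((0,0),(1,1)), s((0,0),(2,1)), s((0,0),(3,1)),
      s((1,0),(0,1)), s((2,0),(0,1)), s((3,0),(0,1))}, hfriendly _ ?_, ?_⟩
    · rw [edgeCount_eq_card_filter]; decide
    · simp only [ebIndex, vertexCount_eq_card_filter, labDeg_eq_card_filter]; decide

theorem EBI_crown_four : EBI (crown 4) = {0, 2, 4} :=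
  EBI_crown_four_subset.antisymm subset_EBI_crown_four
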